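/- arXiv:2007.06332 — 2 statements merged into one kernel-verified Lean document; each statement's English description precedes it below -/
import Mathlib

section
/- Let z, z_d, w, w_d ∈ ℝ³ with ‖z‖ = ‖z_d‖ = 1, ⟨z, w⟩ = 0, and ⟨z_d, w_d⟩ = 0. Then ⟨z × (z × z_d), w − (z_d × w_d) × z⟩ = −⟨w, z_d⟩ − ⟨z, w_d⟩. Consequently, for curves z, z_d on the unit sphere with velocities ż, ż_d, the time derivative of the error potential 1 − ⟨z, z_d⟩ equals ⟨(ẑ)² z_d, v_e⟩ where v_e = ż − (z_d × ż_d) × z; i.e., the transport map τ(z, z_d)ż_d = (z_d × ż_d) × z is compatible with the potential k₁(1 − ⟨z, z_d⟩). -/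
open scoped InnerProductSpace

noncomputable section

/-- ℝ³ with the Euclidean inner product and norm. -/
abbrev E3 := EuclideanSpace ℝ (Fin 3)

/-- The cross product on ℝ³. -/
def cross (a b : E3) : E3 :=
  WithLp.toLp 2 ![a 1 * b 2 - a 2 * b 1, a 2 * b 0 - a 0 * b 2, a 0 * b 1 - a 1 * b 0]

/-!
By the vector triple product expansion, `z × (z × z_d) = ⟨z, z_d⟩ z − z_d` for a unit vector `z`, and
`(z_d × w_d) × z = ⟨z_d, z⟩ w_d − ⟨w_d, z⟩ z_d`. Expanding the inner product of the two, the terms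
`⟨z, z_d⟩² ⟨z, w_d⟩` cancel and tangency `w ⊥ z`, `w_d ⊥ z_d` kills the rest, leaving
`−⟨w, z_d⟩ − ⟨z, w_d⟩`. For `w = ż`, `w_d = ż_d` this is, by the product rule, the derivative of
`1 − ⟨z, z_d⟩`.
-/

open scoped Matrix

lemma cross_eq_toLp_crossProduct (a b : E3) : cross a b = WithLp.toLp 2 (a.ofLp ⨯₃ b.ofLp) :=
  rfl

lemma real_inner_eq_dotProduct (a b : E3) : ⟪a, b⟫_ℝ = a.ofLp ⬝ᵥ b.ofLp := by
  rw [EuclideanSpace.inner_eq_star_dotProduct, star_trivial, dotProduct_comm]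

lemma cross_cross_eq_inner_smul_sub (a b c : E3) :
    cross (cross a b) c = ⟪a, c⟫_ℝ • b - ⟪b, c⟫_ℝ • a := by
  simp only [cross_eq_toLp_crossProduct, cross_cross_eq_smul_sub_smul,
    real_inner_eq_dotProduct, WithLp.toLp_sub, WithLp.toLp_smul, WithLp.toLp_ofLp]

lemma cross_cross_eq_inner_smul_sub' (a b c : E3) :
    cross a (cross b c) = ⟪a, c⟫_ℝ • b - ⟪a, b⟫_ℝ • c := by
  simp only [cross_eq_toLp_crossProduct, cross_cross_eq_smul_sub_smul',
    real_inner_eq_dotProduct, WithLp.toLp_sub, WithLp.toLp_smul, WithLp.toLp_ofLp,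
    dotProduct_comm b.ofLp]

lemma inner_cross_cross_sub_cross_cross (z zd w wd : E3) (hz : ‖z‖ = 1) (hzd : ‖zd‖ = 1)
    (hw : ⟪z, w⟫_ℝ = 0) (hwd : ⟪zd, wd⟫_ℝ = 0) :
    ⟪cross z (cross z zd), w - cross (cross zd wd) z⟫_ℝ = -⟪w, zd⟫_ℝ - ⟪z, wd⟫_ℝ := by
  have hzz : ⟪z, z⟫_ℝ = 1 := by rw [real_inner_self_eq_norm_sq, hz, one_pow]
  have hzdzd : ⟪zd, zd⟫_ℝ = 1 := by rw [real_inner_self_eq_norm_sq, hzd, one_pow]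
  have hsq : cross z (cross z zd) = ⟪z, zd⟫_ℝ • z - zd := by
    rw [cross_cross_eq_inner_smul_sub', hzz, one_smul]
  have htransport : cross (cross zd wd) z = ⟪zd, z⟫_ℝ • wd - ⟪wd, z⟫_ℝ • zd :=
    cross_cross_eq_inner_smul_sub zd wd z
  rw [hsq, htransport]
  simp only [inner_sub_left, inner_sub_right, inner_smul_left, inner_smul_right,
    RCLike.conj_to_real, hzdzd, hw, hwd, real_inner_comm z, real_inner_comm zd w]
  ring

/-- For unit vectors z, z_d and tangent vectors w ⊥ z, w_d ⊥ z_d,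
`⟨z × (z × z_d), w − (z_d × w_d) × z⟩ = −⟨w, z_d⟩ − ⟨z, w_d⟩`.
Consequently, for curves z, z_d on the unit sphere, the derivative of the error
potential `1 − ⟨z, z_d⟩` equals `⟨(ẑ)² z_d, v_e⟩` with `v_e = ż − (z_d × ż_d) × z`;
i.e. the transport map `τ(z,z_d)ż_d = (z_d × ż_d) × z` is compatible with the
potential `k₁ (1 − ⟨z, z_d⟩)`. -/
theorem transport_map_compatible_with_error_potential
    (z zd w wd : E3) (hz : ‖z‖ = 1) (hzd : ‖zd‖ = 1)
    (hw : ⟪z, w⟫_ℝ = 0) (hwd : ⟪zd, wd⟫_ℝ = 0) :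
    ⟪cross z (cross z zd), w - cross (cross zd wd) z⟫_ℝ = -⟪w, zd⟫_ℝ - ⟪z, wd⟫_ℝ ∧
    ∀ (zc zdc : ℝ → E3),
      Differentiable ℝ zc → Differentiable ℝ zdc →
      (∀ t, ‖zc t‖ = 1) → (∀ t, ‖zdc t‖ = 1) →
      (∀ t, ⟪zc t, deriv zc t⟫_ℝ = 0) → (∀ t, ⟪zdc t, deriv zdc t⟫_ℝ = 0) →
      ∀ t, HasDerivAt (fun s => 1 - ⟪zc s, zdc s⟫_ℝ)
        (⟪cross (zc t) (cross (zc t) (zdc t)),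
          deriv zc t - cross (cross (zdc t) (deriv zdc t)) (zc t)⟫_ℝ) t := by
  refine ⟨inner_cross_cross_sub_cross_cross z zd w wd hz hzd hw hwd, ?_⟩
  intro zc zdc hzc hzdc hnz hnzd hoz hozd t
  refine (((hzc t).hasDerivAt.inner ℝ (hzdc t).hasDerivAt).const_sub 1).congr_deriv ?_
  rw [inner_cross_cross_sub_cross_cross _ _ _ _ (hnz t) (hnzd t) (hoz t) (hozd t)]
  ring
end
end

section
/- Let φ, φ_d : ℝ → ℝ³ be twice differentiable curves with ‖φ(t)‖ = 1 and ⟨φ(t), φ̇(t)⟩ = 0 for all t. Let T(t) := (φ_d(t) × φ̇_d(t)) × φ(t) be the transported reference velocity. Then the orthogonal projection of Ṫ(t) onto the tangent plane at φ(t) satisfies Ṫ − ⟨Ṫ, φ⟩·φ = ⟨φ, φ_d × φ̇_d⟩·(φ × φ̇) + (φ_d × φ̈_d) × φ; i.e., the covariant derivative ∇_{φ̇}(τ(φ, φ_d)φ̇_d) along φ equals ⟨φ, φ_d × φ̇_d⟩(φ × φ̇) + (φ_d × φ̈_d) × φ. -/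
/-!
Write `c = φ_d × φ̇_d`. The product rule gives `Ṫ = ċ × φ + c × φ̇` with `ċ = φ_d × φ̈_d`, since
`φ̇_d × φ̇_d = 0`. The term `ċ × φ` is already tangent at `φ`. On the unit sphere the tangential
projection is `x ↦ -φ × (φ × x)`, and the BAC–CAB rule together with `⟨φ, φ̇⟩ = 0` turns
`-φ × (φ × (c × φ̇))` into `⟨φ, c⟩ φ × φ̇`.
-/

open scoped InnerProductSpace

noncomputable section

namespace E3

open Matrix WithLp

theorem cross_eq_toLp_crossProduct (a b : E3) : cross a b = toLp 2 (ofLp a ⨯₃ ofLp b) := rfl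

theorem inner_eq_dotProduct (a b : E3) : ⟪a, b⟫_ℝ = ofLp a ⬝ᵥ ofLp b :=
  dotProduct_comm _ _

def crossCLM : E3 →L[ℝ] E3 →L[ℝ] E3 :=
  let e := (WithLp.linearEquiv 2 ℝ (Fin 3 → ℝ)).toLinearMap
  LinearMap.toContinuousLinearMap <| LinearMap.toContinuousLinearMap.toLinearMap ∘ₗ
    ((crossProduct.compl₁₂ e e).compr₂ (WithLp.linearEquiv 2 ℝ (Fin 3 → ℝ)).symm.toLinearMap)

theorem crossCLM_apply (a b : E3) : crossCLM a b = cross a b := rfl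

theorem cross_self (a : E3) : cross a a = 0 := by
  simp [cross_eq_toLp_crossProduct]

theorem inner_cross_self (a b : E3) : ⟪cross a b, b⟫_ℝ = 0 := by
  rw [real_inner_comm, inner_eq_dotProduct, cross_eq_toLp_crossProduct, ofLp_toLp,
    dot_cross_self]

theorem cross_cross (a b c : E3) : cross a (cross b c) = ⟪a, c⟫_ℝ • b - ⟪a, b⟫_ℝ • c := by
  apply ofLp_injective
  simp [cross_eq_toLp_crossProduct, inner_eq_dotProduct, cross_cross_eq_smul_sub_smul',
    dotProduct_comm]

theorem _root_.HasDerivAt.cross {f g : ℝ → E3} {f' g' : E3} {t : ℝ}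
    (hf : HasDerivAt f f' t) (hg : HasDerivAt g g' t) :
    HasDerivAt (fun s => cross (f s) (g s)) (cross f' (g t) + cross (f t) g') t := by
  simpa only [Function.comp_apply, crossCLM_apply] using
    (crossCLM.hasFDerivAt.comp_hasDerivAt t hf).clm_apply hg

theorem sub_inner_smul_eq_neg_cross_cross {p : E3} (hp : ‖p‖ = 1) (x : E3) :
    x - ⟪x, p⟫_ℝ • p = -cross p (cross p x) := by
  rw [cross_cross, real_inner_self_eq_norm_sq, hp, real_inner_comm]
  simp

theorem cross_sub_inner_smul_of_inner_eq_zero {p v : E3} (hp : ‖p‖ = 1) (hv : ⟪p, v⟫_ℝ = 0)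
    (c : E3) : cross c v - ⟪cross c v, p⟫_ℝ • p = ⟪p, c⟫_ℝ • cross p v := by
  rw [sub_inner_smul_eq_neg_cross_cross hp, cross_cross p c v, hv, zero_smul, zero_sub,
    ← crossCLM_apply, map_neg, map_smul, neg_neg, crossCLM_apply]

end E3

theorem covariant_derivative_of_transported_velocity_general
    (φ φd : ℝ → E3)
    (hφ : Differentiable ℝ φ)
    (hφd : Differentiable ℝ φd) (hφd' : Differentiable ℝ (deriv φd))
    (hsph : ∀ t, ‖φ t‖ = 1)
    (horth : ∀ t, ⟪φ t, deriv φ t⟫_ℝ = 0)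
    (T : ℝ → E3)
    (hT : ∀ t, T t = cross (cross (φd t) (deriv φd t)) (φ t)) :
    ∀ t, deriv T t - ⟪deriv T t, φ t⟫_ℝ • φ t =
      ⟪φ t, cross (φd t) (deriv φd t)⟫_ℝ • cross (φ t) (deriv φ t) +
        cross (cross (φd t) (deriv (deriv φd) t)) (φ t) := by
  intro t
  have hc : HasDerivAt (fun s => cross (φd s) (deriv φd s))
      (cross (φd t) (deriv (deriv φd) t)) t := by
    simpa only [E3.cross_self, zero_add] using (hφd t).hasDerivAt.cross (hφd' t).hasDerivAt
  have hT' : HasDerivAt T (cross (cross (φd t) (deriv (deriv φd) t)) (φ t) +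
      cross (cross (φd t) (deriv φd t)) (deriv φ t)) t := by
    rw [funext hT]
    exact hc.cross (hφ t).hasDerivAt
  rw [hT'.deriv, inner_add_left, add_smul, add_sub_add_comm, E3.inner_cross_self, zero_smul,
    sub_zero, E3.cross_sub_inner_smul_of_inner_eq_zero (hsph t) (horth t), add_comm]

/-- For twice differentiable curves φ, φ_d with φ on the unit sphere
(`‖φ‖ = 1`, `⟨φ, φ̇⟩ = 0`), the transported reference velocity
`T = (φ_d × φ̇_d) × φ` satisfies
`Ṫ − ⟨Ṫ, φ⟩ φ = ⟨φ, φ_d × φ̇_d⟩ (φ × φ̇) + (φ_d × φ̈_d) × φ`,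
i.e. the covariant derivative `∇_{φ̇}(τ(φ,φ_d)φ̇_d)` equals the stated feedforward
term. -/
theorem covariant_derivative_of_transported_velocity
    (φ φd : ℝ → E3)
    (hφ : Differentiable ℝ φ) (hφ' : Differentiable ℝ (deriv φ))
    (hφd : Differentiable ℝ φd) (hφd' : Differentiable ℝ (deriv φd))
    (hsph : ∀ t, ‖φ t‖ = 1)
    (horth : ∀ t, ⟪φ t, deriv φ t⟫_ℝ = 0)
    (T : ℝ → E3)
    (hT : ∀ t, T t = cross (cross (φd t) (deriv φd t)) (φ t)) :
    ∀ t, deriv T t - ⟪deriv T t, φ t⟫_ℝ • φ t =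
      ⟪φ t, cross (φd t) (deriv φd t)⟫_ℝ • cross (φ t) (deriv φ t) +
        cross (cross (φd t) (deriv (deriv φd) t)) (φ t) :=
  covariant_derivative_of_transported_velocity_general φ φd hφ hφd hφd' hsph horth T hT
end
end
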